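/- Let f: ℝ^n → ℝ^n be continuously differentiable with f(0) = 0, defined on the nonnegative orthant. Suppose for every x ≥ 0 the Jacobian J(x) is Metzler with negative diagonal entries, and suppose there exists a constant Metzler matrix M with m_{ii} = −1 that is Hurwitz and such that J_{ij}(x)/(−J_{ii}(x)) ≤ m_{ij} for all i ≠ j and all x ≥ 0. Then there exist positive constants ψ_{ij} (for m_{ij} > 0, i≠j) such that for every x ≥ 0 and every i, ∑_{j≠i} (J_{ij}(x)/(−J_{ii}(x))) ψ_{ij}^{-1} ≤ 1, and for every simple directed cycle (i_1,...,i_k,i_1) of the digraph of M, ψ_{i_2 i_1} ⋯ ψ_{i_1 i_k} < 1. -/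

import Mathlib

open Matrix

/-- A matrix is Metzler if all off-diagonal entries are nonnegative. -/
def Metzler {n : ℕ} (M : Matrix (Fin n) (Fin n) ℝ) : Prop :=
  ∀ i j, i ≠ j → 0 ≤ M i j

/-- A real matrix is Hurwitz if every (complex) eigenvalue has negative real part. -/
def Hurwitz {n : ℕ} (M : Matrix (Fin n) (Fin n) ℝ) : Prop :=
  ∀ μ ∈ spectrum ℂ (M.map Complex.ofReal), μ.re < 0

/-- Cyclic successor index in a list. -/
def cyclicNext {α : Type*} (l : List α) (t : Fin l.length) : Fin l.length :=
  ⟨(t.1 + 1) % l.length, Nat.mod_lt _ (Nat.lt_of_le_of_lt (Nat.zero_le _) t.isLt)⟩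

/-- A simple directed cycle of the digraph of \`M\` (edge from \`j\` to \`i\` when \`i ≠ j\`
and \`M i j > 0\`), recorded as a nodup list of at least two nodes: consecutive nodes
(cyclically) are joined by edges. -/
def IsCycle {n : ℕ} (M : Matrix (Fin n) (Fin n) ℝ) (l : List (Fin n)) : Prop :=
  2 ≤ l.length ∧ l.Nodup ∧
    ∀ t : Fin l.length, 0 < M (l.get (cyclicNext l t)) (l.get t)

/-- The sum-cycle gain ∏ₜ m_{i_{t+1} i_t} / (−m_{i_{t+1} i_{t+1}}) of a cycle. -/
noncomputable def cycleGain {n : ℕ} (M : Matrix (Fin n) (Fin n) ℝ)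
    (l : List (Fin n)) : ℝ :=
  ∏ t : Fin l.length,
    M (l.get (cyclicNext l t)) (l.get t) / (-M (l.get (cyclicNext l t)) (l.get (cyclicNext l t)))
namespace GainAux

open Filter

open scoped NNReal ENNReal Topology

attribute [local instance] Matrix.linftyOpSeminormedAddCommGroup Matrix.linftyOpNormedAddCommGroup Matrix.linftyOpNormedSpace
  Matrix.linftyOpNormedRing Matrix.linftyOpNormedAlgebra

variable {n : ℕ}

lemma entry_nnnorm_le {α : Type*} [SeminormedAddCommGroup α] (X : Matrix (Fin n) (Fin n) α)
    (i j : Fin n) : ‖X i j‖₊ ≤ ‖X‖₊ := by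
  rw [Matrix.linfty_opNNNorm_def]
  refine le_trans (Finset.single_le_sum (f := fun j => ‖X i j‖₊) (fun _ _ => zero_le)
    (Finset.mem_univ j)) ?_
  exact Finset.le_sup (f := fun i => ∑ j, ‖X i j‖₊) (Finset.mem_univ i)

lemma nnnorm_le_of_entry {α : Type*} [SeminormedAddCommGroup α]
    (X Y : Matrix (Fin n) (Fin n) α) (h : ∀ i j, ‖X i j‖₊ ≤ ‖Y i j‖₊) : ‖X‖₊ ≤ ‖Y‖₊ := by
  rw [Matrix.linfty_opNNNorm_def, Matrix.linfty_opNNNorm_def]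
  exact Finset.sup_mono_fun fun i _ => Finset.sum_le_sum fun j _ => h i j

lemma nnnorm_map_ofReal (X : Matrix (Fin n) (Fin n) ℝ) :
    ‖X.map Complex.ofReal‖₊ = ‖X‖₊ := by
  rw [Matrix.linfty_opNNNorm_def, Matrix.linfty_opNNNorm_def]
  congr 1; funext i
  exact Finset.sum_congr rfl fun j _ => by simp [Matrix.map_apply]

/-- Entry evaluation as a continuous linear map. -/
noncomputable def entryCLM (𝕜 : Type*) [NontriviallyNormedField 𝕜] (i j : Fin n) :
    Matrix (Fin n) (Fin n) 𝕜 →L[𝕜] 𝕜 :=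
  LinearMap.mkContinuous
    { toFun := fun X => X i j
      map_add' := fun _ _ => rfl
      map_smul' := fun _ _ => rfl } 1
    (fun X => by rw [one_mul]; exact_mod_cast (entry_nnnorm_le X i j : ‖X i j‖₊ ≤ ‖X‖₊))

@[simp] lemma entryCLM_apply {𝕜 : Type*} [NontriviallyNormedField 𝕜] (i j : Fin n)
    (X : Matrix (Fin n) (Fin n) 𝕜) : entryCLM 𝕜 i j X = X i j := rfl

lemma entry_tsum {𝕜 : Type*} [NontriviallyNormedField 𝕜] {f : ℕ → Matrix (Fin n) (Fin n) 𝕜}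
    (hf : Summable f) (i j : Fin n) : (∑' k, f k) i j = ∑' k, f k i j := by
  have h3 := (entryCLM 𝕜 i j).map_tsum hf
  simpa only [entryCLM_apply] using h3

lemma entry_summable {𝕜 : Type*} [NontriviallyNormedField 𝕜] {f : ℕ → Matrix (Fin n) (Fin n) 𝕜}
    (hf : Summable f) (i j : Fin n) : Summable fun k => f k i j := by
  have h3 := (entryCLM 𝕜 i j).summable hf
  simpa only [entryCLM_apply] using h3

lemma tsum_eq_one_of_telescope {R : Type*} [NormedRing R] [CompleteSpace R] (f g : ℕ → R)
    (hf : Summable f) (hrel : ∀ k, f k = g k - g (k + 1)) (hg0 : g 0 = 1)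
    (hg : Tendsto g atTop (nhds 0)) : ∑' k, f k = 1 := by
  have h1 : Tendsto (fun K => ∑ i ∈ Finset.range K, f i) atTop (nhds (∑' k, f k)) :=
    hf.hasSum.tendsto_sum_nat
  have h2 : Tendsto (fun K => ∑ i ∈ Finset.range K, f i) atTop (nhds 1) := by
    have : ∀ K, ∑ i ∈ Finset.range K, f i = g 0 - g K := by
      intro K
      rw [← Finset.sum_range_sub' g K]
      exact Finset.sum_congr rfl fun i _ => hrel i
    simp only [this, hg0]
    simpa using (tendsto_const_nhds (x := (1 : R))).sub hg
  exact tendsto_nhds_unique h1 h2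

lemma pow_entry_nonneg (A : Matrix (Fin n) (Fin n) ℝ) (hA : ∀ i j, 0 ≤ A i j) (k : ℕ) :
    ∀ i j, 0 ≤ (A ^ k) i j := by
  induction k with
  | zero => intro i j; by_cases h : i = j <;> simp [pow_zero, Matrix.one_apply, h]
  | succ m ih =>
    intro i j
    rw [pow_succ, Matrix.mul_apply]
    exact Finset.sum_nonneg fun l _ => mul_nonneg (ih i l) (hA l j)

lemma eventually_nnnorm_pow_le [Nonempty (Fin n)] (B : Matrix (Fin n) (Fin n) ℂ) {c : ℝ≥0}
    (h : spectralRadius ℂ B < c) : ∀ᶠ k in atTop, ‖B ^ k‖₊ ≤ c ^ k := by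
  haveI : CompleteSpace (Matrix (Fin n) (Fin n) ℂ) := by infer_instance
  have hg := spectrum.pow_nnnorm_pow_one_div_tendsto_nhds_spectralRadius B
  have h1 : ∀ᶠ k : ℕ in atTop, ((‖B ^ k‖₊ : ℝ≥0∞) ^ ((1 : ℝ) / (k : ℝ))) < (c : ℝ≥0∞) :=
    hg.eventually_lt_const h
  filter_upwards [h1, eventually_ge_atTop 1] with k hk hk1
  have hk0 : (k : ℝ) ≠ 0 := by positivity
  have h2 : ((‖B ^ k‖₊ : ℝ≥0∞)) ≤ ((c ^ k : ℝ≥0) : ℝ≥0∞) := by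
    calc (‖B ^ k‖₊ : ℝ≥0∞) = ((‖B ^ k‖₊ : ℝ≥0∞) ^ ((1:ℝ)/(k:ℝ))) ^ (k:ℝ) := by
          rw [← ENNReal.rpow_mul, one_div, inv_mul_cancel₀ hk0, ENNReal.rpow_one]
      _ ≤ (c:ℝ≥0∞) ^ (k:ℝ) := ENNReal.rpow_le_rpow hk.le (by positivity)
      _ = ((c ^ k : ℝ≥0) : ℝ≥0∞) := by rw [ENNReal.rpow_natCast, ← ENNReal.coe_pow]
  exact_mod_cast h2
lemma summable_geom_aux {E : Type*} [NormedAddCommGroup E] [CompleteSpace E]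
    (f : ℕ → E) {c s : ℝ} (hc : 0 ≤ c) (hcs : c < s) (hs : 0 < s)
    (h : ∀ᶠ k in atTop, ‖f k‖ ≤ s⁻¹ ^ (k + 1) * c ^ k) : Summable f := by
  refine Summable.of_norm_bounded_eventually_nat (g := fun k => s⁻¹ ^ (k + 1) * c ^ k) ?_ h
  have h1 : Summable (fun k : ℕ => (c / s) ^ k) :=
    summable_geometric_of_lt_one (by positivity) (by rw [div_lt_one hs]; exact hcs)
  refine (h1.mul_left s⁻¹).congr fun k => ?_
  rw [div_pow, pow_succ, div_eq_mul_inv, inv_pow]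
  ring

lemma summable_res [Nonempty (Fin n)] (B : Matrix (Fin n) (Fin n) ℂ) {z : ℂ}
    (h : spectralRadius ℂ B < (‖z‖₊ : ℝ≥0∞)) :
    Summable (fun k : ℕ => z⁻¹ ^ (k + 1) • B ^ k) := by
  obtain ⟨c, hc1, hc2⟩ := ENNReal.lt_iff_exists_nnreal_btwn.mp h
  have hcz : (c : ℝ) < ‖z‖ := by exact_mod_cast hc2
  have hz : (0 : ℝ) < ‖z‖ := lt_of_le_of_lt (c.coe_nonneg) hcz
  refine summable_geom_aux _ c.coe_nonneg hcz hz ?_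
  filter_upwards [eventually_nnnorm_pow_le B hc1] with k hk
  have h3 : ‖z⁻¹ ^ (k + 1) • B ^ k‖ = ‖z‖⁻¹ ^ (k + 1) * ‖B ^ k‖ := by
    rw [norm_smul, norm_pow, norm_inv]
  rw [h3]
  refine mul_le_mul_of_nonneg_left ?_ (by positivity)
  exact_mod_cast hk

lemma inverse_eq_tsum [Nonempty (Fin n)] (B : Matrix (Fin n) (Fin n) ℂ) {z : ℂ}
    (h : spectralRadius ℂ B < (‖z‖₊ : ℝ≥0∞)) :
    Ring.inverse (algebraMap ℂ (Matrix (Fin n) (Fin n) ℂ) z - B)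
      = ∑' k : ℕ, z⁻¹ ^ (k + 1) • B ^ k := by
  have hz : z ≠ 0 := by
    rintro rfl
    simp at h
  have hu : IsUnit (algebraMap ℂ (Matrix (Fin n) (Fin n) ℂ) z - B) :=
    spectrum.mem_resolventSet_iff.mp (spectrum.mem_resolventSet_of_spectralRadius_lt h)
  have hsum := summable_res B h
  set u := algebraMap ℂ (Matrix (Fin n) (Fin n) ℂ) z - B with hu_def
  have hz1 : ∀ k : ℕ, z * z⁻¹ ^ (k + 1) = z⁻¹ ^ k := by
    intro k
    rw [pow_succ', ← mul_assoc, mul_inv_cancel₀ hz, one_mul]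
  have key : u * (∑' k : ℕ, z⁻¹ ^ (k + 1) • B ^ k) = 1 := by
    rw [← hsum.tsum_mul_left u]
    refine tsum_eq_one_of_telescope _ (fun k => z⁻¹ ^ k • B ^ k) (hsum.mul_left u) ?_ (by simp) ?_
    · intro k
      rw [hu_def, sub_mul, Algebra.algebraMap_eq_smul_one, smul_mul_assoc, one_mul, smul_smul,
        hz1, mul_smul_comm, ← pow_succ']
    · have h0 := hsum.tendsto_atTop_zero
      have h2 := h0.const_smul (c := z)
      rw [smul_zero] at h2
      refine h2.congr fun k => ?_
      rw [smul_smul, hz1 k]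
  calc Ring.inverse u = Ring.inverse u * (u * (∑' k : ℕ, z⁻¹ ^ (k + 1) • B ^ k)) := by
        rw [key, mul_one]
    _ = (Ring.inverse u * u) * (∑' k : ℕ, z⁻¹ ^ (k + 1) • B ^ k) := by rw [mul_assoc]
    _ = ∑' k : ℕ, z⁻¹ ^ (k + 1) • B ^ k := by rw [Ring.inverse_mul_cancel _ hu, one_mul]
lemma mul_tsum_res {F R : Type*} [NormedField F] [NormedRing R] [CompleteSpace R]
    [NormedAlgebra F R] {z : F} (hz : z ≠ 0) (B : R)
    (hsum : Summable fun k : ℕ => z⁻¹ ^ (k + 1) • B ^ k) :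
    (algebraMap F R z - B) * (∑' k : ℕ, z⁻¹ ^ (k + 1) • B ^ k) = 1 := by
  set u := algebraMap F R z - B with hu_def
  have hz1 : ∀ k : ℕ, z * z⁻¹ ^ (k + 1) = z⁻¹ ^ k := by
    intro k
    rw [pow_succ', ← mul_assoc, mul_inv_cancel₀ hz, one_mul]
  rw [← hsum.tsum_mul_left u]
  refine tsum_eq_one_of_telescope _ (fun k => z⁻¹ ^ k • B ^ k) (hsum.mul_left u) ?_ (by simp) ?_
  · intro k
    rw [hu_def, sub_mul, Algebra.algebraMap_eq_smul_one, smul_mul_assoc, one_mul, smul_smul,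
      hz1, mul_smul_comm, ← pow_succ']
  · have h2 := hsum.tendsto_atTop_zero.const_smul (c := z)
    rw [smul_zero] at h2
    refine h2.congr fun k => ?_
    rw [smul_smul, hz1 k]

lemma map_ofReal_pow (A : Matrix (Fin n) (Fin n) ℝ) (k : ℕ) :
    (A.map Complex.ofReal) ^ k = (A ^ k).map Complex.ofReal := by
  have h := map_pow (Complex.ofRealHom.mapMatrix (m := Fin n)) A k
  simp only [RingHom.mapMatrix_apply] at h
  exact h.symm

lemma summable_real_geom [Nonempty (Fin n)] (A : Matrix (Fin n) (Fin n) ℝ) {s : ℝ} (hs : 0 < s)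
    (h : spectralRadius ℂ (A.map Complex.ofReal) < ENNReal.ofReal s) :
    Summable (fun k : ℕ => s⁻¹ ^ (k + 1) • A ^ k) := by
  obtain ⟨c, hc1, hc2⟩ := ENNReal.lt_iff_exists_nnreal_btwn.mp h
  have hcs : (c : ℝ) < s := by
    rw [← ENNReal.ofReal_coe_nnreal] at hc2
    exact (ENNReal.ofReal_lt_ofReal_iff_of_nonneg c.coe_nonneg).mp hc2
  refine summable_geom_aux _ c.coe_nonneg hcs hs ?_
  filter_upwards [eventually_nnnorm_pow_le (A.map Complex.ofReal) hc1] with k hk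
  have h4 : ‖A ^ k‖₊ ≤ c ^ k := by
    rw [← nnnorm_map_ofReal (A ^ k), ← map_ofReal_pow]; exact hk
  have h3 : ‖s⁻¹ ^ (k + 1) • A ^ k‖ = s⁻¹ ^ (k + 1) * ‖A ^ k‖ := by
    rw [norm_smul, norm_pow, Real.norm_eq_abs, abs_of_pos (inv_pos.mpr hs)]
  rw [h3]
  refine mul_le_mul_of_nonneg_left ?_ (by positivity)
  exact_mod_cast h4
lemma ring_inverse_eq {R : Type*} [Ring R] (u S : R) (hu : IsUnit u) (h : u * S = 1) :
    Ring.inverse u = S := by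
  calc Ring.inverse u = Ring.inverse u * (u * S) := by rw [h, mul_one]
    _ = (Ring.inverse u * u) * S := by rw [mul_assoc]
    _ = S := by rw [Ring.inverse_mul_cancel _ hu, one_mul]

lemma map_ofReal_algebraMap (s : ℝ) :
    (algebraMap ℝ (Matrix (Fin n) (Fin n) ℝ) s).map Complex.ofReal
      = algebraMap ℂ (Matrix (Fin n) (Fin n) ℂ) (s : ℂ) := by
  ext i j
  by_cases h : i = j <;>
    simp [Matrix.map_apply, Matrix.algebraMap_matrix_apply, h]

lemma inverse_nnnorm_le [Nonempty (Fin n)] (A : Matrix (Fin n) (Fin n) ℝ)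
    (hA : ∀ i j, 0 ≤ A i j) {z : ℂ}
    (h : spectralRadius ℂ (A.map Complex.ofReal) < (‖z‖₊ : ℝ≥0∞)) :
    ‖Ring.inverse (algebraMap ℂ (Matrix (Fin n) (Fin n) ℂ) z - A.map Complex.ofReal)‖₊
      ≤ ‖Ring.inverse (algebraMap ℂ (Matrix (Fin n) (Fin n) ℂ) ((‖z‖ : ℝ) : ℂ)
          - A.map Complex.ofReal)‖₊ := by
  set B := A.map Complex.ofReal with hB_def
  set s : ℝ := ‖z‖ with hs_def
  have hs : 0 < s := by
    have h0 : (0 : ℝ≥0∞) < (‖z‖₊ : ℝ≥0∞) := lt_of_le_of_lt zero_le h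
    have : ‖z‖₊ ≠ 0 := by simpa using h0.ne'
    simpa [hs_def, norm_pos_iff] using (pos_iff_ne_zero.mpr this : 0 < ‖z‖₊)
  have hsnn : (‖((s : ℝ) : ℂ)‖₊ : ℝ≥0∞) = (‖z‖₊ : ℝ≥0∞) := by
    rw [Complex.nnnorm_real, nnnorm_norm]
  have hofr : ENNReal.ofReal s = (‖z‖₊ : ℝ≥0∞) := by
    rw [hs_def, ofReal_norm, enorm_eq_nnnorm]
  have hsum_real : Summable (fun k : ℕ => s⁻¹ ^ (k + 1) • A ^ k) :=
    summable_real_geom A hs (by rw [hofr]; exact h)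
  set SR := ∑' k : ℕ, s⁻¹ ^ (k + 1) • A ^ k with hSR_def
  have hs0 : s ≠ 0 := hs.ne'
  have hrel : (algebraMap ℝ (Matrix (Fin n) (Fin n) ℝ) s - A) * SR = 1 :=
    mul_tsum_res hs0 A hsum_real
  have hUnit_s : IsUnit (algebraMap ℂ (Matrix (Fin n) (Fin n) ℂ) (s : ℂ) - B) :=
    spectrum.mem_resolventSet_iff.mp
      (spectrum.mem_resolventSet_of_spectralRadius_lt (by rw [hsnn]; exact h))
  have hmap : (algebraMap ℂ (Matrix (Fin n) (Fin n) ℂ) (s : ℂ) - B)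
      * (SR.map Complex.ofReal) = 1 := by
    have h2 := congrArg (fun X : Matrix (Fin n) (Fin n) ℝ => Complex.ofRealHom.mapMatrix X) hrel
    simp only [_root_.map_mul, _root_.map_sub, _root_.map_one, RingHom.mapMatrix_apply] at h2
    have e : (algebraMap ℝ (Matrix (Fin n) (Fin n) ℝ) s).map ⇑Complex.ofRealHom
        = algebraMap ℂ (Matrix (Fin n) (Fin n) ℂ) (s : ℂ) := map_ofReal_algebraMap s
    rw [e] at h2
    exact h2
  have hinv_s : Ring.inverse (algebraMap ℂ (Matrix (Fin n) (Fin n) ℂ) (s : ℂ) - B)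
      = SR.map Complex.ofReal := ring_inverse_eq _ _ hUnit_s hmap
  have hinv_z := inverse_eq_tsum B h
  rw [hinv_z, hinv_s]
  refine nnnorm_le_of_entry _ _ fun i j => ?_
  have hzsum := summable_res B h
  have e1 : (∑' k : ℕ, z⁻¹ ^ (k + 1) • B ^ k) i j = ∑' k : ℕ, z⁻¹ ^ (k + 1) * ((B ^ k) i j) := by
    rw [entry_tsum hzsum i j]
    exact tsum_congr fun k => by rw [Matrix.smul_apply, smul_eq_mul]
  have e2 : SR i j = ∑' k : ℕ, s⁻¹ ^ (k + 1) * ((A ^ k) i j) := by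
    rw [hSR_def, entry_tsum hsum_real i j]
    exact tsum_congr fun k => by rw [Matrix.smul_apply, smul_eq_mul]
  have hb : ∀ k : ℕ, ‖z⁻¹ ^ (k + 1) * ((B ^ k) i j)‖ = s⁻¹ ^ (k + 1) * ((A ^ k) i j) := by
    intro k
    have hBk : (B ^ k) i j = ((A ^ k) i j : ℂ) := by
      rw [map_ofReal_pow]; rfl
    rw [norm_mul, norm_pow, norm_inv, hBk, Complex.norm_real, Real.norm_eq_abs,
      abs_of_nonneg (pow_entry_nonneg A hA k i j)]
  have hsum_norm : Summable (fun k : ℕ => ‖z⁻¹ ^ (k + 1) * ((B ^ k) i j)‖) := by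
    have h4 : Summable (fun k : ℕ => (s⁻¹ ^ (k + 1) • A ^ k) i j) :=
      entry_summable hsum_real i j
    refine h4.congr fun k => ?_
    rw [hb k, Matrix.smul_apply, smul_eq_mul]
  have hnorm : ‖(∑' k : ℕ, z⁻¹ ^ (k + 1) • B ^ k) i j‖ ≤ ‖(SR.map Complex.ofReal) i j‖ := by
    have hSRnn : 0 ≤ SR i j := by
      rw [e2]
      exact tsum_nonneg fun k => mul_nonneg (by positivity) (pow_entry_nonneg A hA k i j)
    have h5 : ‖(SR.map Complex.ofReal) i j‖ = SR i j := by
      rw [Matrix.map_apply, Complex.norm_real, Real.norm_eq_abs, abs_of_nonneg hSRnn]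
    rw [h5, e1, e2]
    calc ‖∑' k : ℕ, z⁻¹ ^ (k + 1) * ((B ^ k) i j)‖
        ≤ ∑' k : ℕ, ‖z⁻¹ ^ (k + 1) * ((B ^ k) i j)‖ := norm_tsum_le_tsum_norm hsum_norm
      _ = ∑' k : ℕ, s⁻¹ ^ (k + 1) * ((A ^ k) i j) := tsum_congr hb
  exact_mod_cast hnorm
lemma spectralRadius_mem_spectrum [Nonempty (Fin n)] (A : Matrix (Fin n) (Fin n) ℝ)
    (hA : ∀ i j, 0 ≤ A i j) :
    (((spectralRadius ℂ (A.map Complex.ofReal)).toReal : ℝ) : ℂ)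
      ∈ spectrum ℂ (A.map Complex.ofReal) := by
  set B := A.map Complex.ofReal with hB
  obtain ⟨z₀, hz₀mem, hz₀⟩ := spectrum.exists_nnnorm_eq_spectralRadius (a := B)
  have hρ : (spectralRadius ℂ B).toReal = ‖z₀‖ := by rw [← hz₀]; simp
  rw [hρ]
  by_cases hz0 : z₀ = 0
  · rw [hz0]
    simpa [hz0] using hz₀mem
  by_contra hmem
  set r : ℝ := ‖z₀‖ with hr_def
  have hr : 0 < r := norm_pos_iff.mpr hz0
  have hUnit_r : IsUnit (algebraMap ℂ (Matrix (Fin n) (Fin n) ℂ) ((r : ℝ) : ℂ) - B) :=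
    spectrum.notMem_iff.mp hmem
  set G : ℝ → Matrix (Fin n) (Fin n) ℂ :=
    fun t => Ring.inverse (algebraMap ℂ (Matrix (Fin n) (Fin n) ℂ) ((t * r : ℝ) : ℂ) - B)
    with hG_def
  have hmapcont : Continuous
      (fun t : ℝ => algebraMap ℂ (Matrix (Fin n) (Fin n) ℂ) ((t * r : ℝ) : ℂ) - B) := by
    refine Continuous.sub ?_ continuous_const
    exact (continuous_algebraMap ℂ (Matrix (Fin n) (Fin n) ℂ)).comp
      (Complex.continuous_ofReal.comp (continuous_id.mul continuous_const))
  have hGcont : ContinuousAt G 1 := by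
    have h2 : ContinuousAt (Ring.inverse : Matrix (Fin n) (Fin n) ℂ → Matrix (Fin n) (Fin n) ℂ)
        (algebraMap ℂ (Matrix (Fin n) (Fin n) ℂ) (((1 : ℝ) * r : ℝ) : ℂ) - B) := by
      have h1 : algebraMap ℂ (Matrix (Fin n) (Fin n) ℂ) (((1 : ℝ) * r : ℝ) : ℂ) - B
          = ↑hUnit_r.unit := by
        rw [IsUnit.unit_spec, one_mul]
      rw [h1]
      exact NormedRing.inverse_continuousAt _
    exact ContinuousAt.comp (x := (1 : ℝ)) (g := Ring.inverse)
      (f := fun t : ℝ => algebraMap ℂ (Matrix (Fin n) (Fin n) ℂ) ((t * r : ℝ) : ℂ) - B)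
      h2 hmapcont.continuousAt
  set K : ℝ := ‖G 1‖ + 1 with hK_def
  have hK : 0 < K := by positivity
  have E1 : ∀ᶠ t in nhdsWithin (1 : ℝ) (Set.Ioi 1), ‖G t‖ < K := by
    have ht : Filter.Tendsto (fun t : ℝ => ‖G t‖) (nhds (1 : ℝ)) (nhds ‖G 1‖) := hGcont.norm
    have hlt : ‖G 1‖ < K := by rw [hK_def]; exact lt_add_one _
    exact (ht.eventually_lt_const hlt).filter_mono nhdsWithin_le_nhds
  have E2 : ∀ᶠ t : ℝ in nhdsWithin (1 : ℝ) (Set.Ioi 1),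
      ‖algebraMap ℂ (Matrix (Fin n) (Fin n) ℂ) z₀
        - algebraMap ℂ (Matrix (Fin n) (Fin n) ℂ) ((t : ℂ) * z₀)‖ < K⁻¹ := by
    have hcont2 : ContinuousAt (fun t : ℝ => ‖algebraMap ℂ (Matrix (Fin n) (Fin n) ℂ) z₀
        - algebraMap ℂ (Matrix (Fin n) (Fin n) ℂ) ((t : ℂ) * z₀)‖) 1 := by
      refine ContinuousAt.norm ?_
      refine ContinuousAt.sub continuousAt_const ?_
      exact ((continuous_algebraMap ℂ (Matrix (Fin n) (Fin n) ℂ)).comp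
        ((Complex.continuous_ofReal.mul continuous_const))).continuousAt
    have h0 : ‖algebraMap ℂ (Matrix (Fin n) (Fin n) ℂ) z₀
        - algebraMap ℂ (Matrix (Fin n) (Fin n) ℂ) (((1 : ℝ) : ℂ) * z₀)‖ = 0 := by
      simp
    have ht : Filter.Tendsto (fun t : ℝ => ‖algebraMap ℂ (Matrix (Fin n) (Fin n) ℂ) z₀
        - algebraMap ℂ (Matrix (Fin n) (Fin n) ℂ) ((t : ℂ) * z₀)‖) (nhds 1)
        (nhds ‖algebraMap ℂ (Matrix (Fin n) (Fin n) ℂ) z₀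
          - algebraMap ℂ (Matrix (Fin n) (Fin n) ℂ) (((1 : ℝ) : ℂ) * z₀)‖) := hcont2
    rw [h0] at ht
    exact (ht.eventually_lt_const (by positivity)).filter_mono nhdsWithin_le_nhds
  have E3 : ∀ᶠ t in nhdsWithin (1 : ℝ) (Set.Ioi 1), (1 : ℝ) < t :=
    eventually_mem_nhdsWithin.mono fun t ht => ht
  obtain ⟨t, htK, htnear, ht1⟩ := (E1.and (E2.and E3)).exists
  have hzt : spectralRadius ℂ B < (‖(t : ℂ) * z₀‖₊ : ℝ≥0∞) := by
    rw [← hz₀]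
    rw [ENNReal.coe_lt_coe]
    have : ‖(t : ℂ) * z₀‖ = t * r := by
      rw [norm_mul, Complex.norm_real, Real.norm_eq_abs, abs_of_pos (lt_trans one_pos ht1)]
    rw [← NNReal.coe_lt_coe, coe_nnnorm, coe_nnnorm, this]
    nlinarith
  have hu_t : IsUnit (algebraMap ℂ (Matrix (Fin n) (Fin n) ℂ) ((t : ℂ) * z₀) - B) :=
    spectrum.mem_resolventSet_iff.mp (spectrum.mem_resolventSet_of_spectralRadius_lt hzt)
  have hnorm_tz : ‖(t : ℂ) * z₀‖ = t * r := by
    rw [norm_mul, Complex.norm_real, Real.norm_eq_abs, abs_of_pos (lt_trans one_pos ht1)]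
  have hb1 : ‖Ring.inverse (algebraMap ℂ (Matrix (Fin n) (Fin n) ℂ) ((t : ℂ) * z₀) - B)‖
      ≤ ‖G t‖ := by
    have h2 := inverse_nnnorm_le A hA (z := (t : ℂ) * z₀) hzt
    rw [hnorm_tz] at h2
    exact_mod_cast h2
  set x := hu_t.unit with hx_def
  have hxval : (x : Matrix (Fin n) (Fin n) ℂ)
      = algebraMap ℂ (Matrix (Fin n) (Fin n) ℂ) ((t : ℂ) * z₀) - B := hu_t.unit_spec
  have hxinv : ‖((x⁻¹ : Units (Matrix (Fin n) (Fin n) ℂ)) : Matrix (Fin n) (Fin n) ℂ)‖ ≤ K := by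
    have h3 : ((x⁻¹ : Units (Matrix (Fin n) (Fin n) ℂ)) : Matrix (Fin n) (Fin n) ℂ)
        = Ring.inverse (x : Matrix (Fin n) (Fin n) ℂ) := (Ring.inverse_unit x).symm
    rw [h3, hxval]
    exact le_trans hb1 (le_of_lt htK)
  have hxinvpos : 0 < ‖((x⁻¹ : Units (Matrix (Fin n) (Fin n) ℂ)) : Matrix (Fin n) (Fin n) ℂ)‖ :=
    Units.norm_pos x⁻¹
  have hnear : ‖(algebraMap ℂ (Matrix (Fin n) (Fin n) ℂ) z₀ - B) - (x : Matrix (Fin n) (Fin n) ℂ)‖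
      < ‖((x⁻¹ : Units (Matrix (Fin n) (Fin n) ℂ)) : Matrix (Fin n) (Fin n) ℂ)‖⁻¹ := by
    rw [hxval, sub_sub_sub_cancel_right]
    calc ‖algebraMap ℂ (Matrix (Fin n) (Fin n) ℂ) z₀
          - algebraMap ℂ (Matrix (Fin n) (Fin n) ℂ) ((t : ℂ) * z₀)‖ < K⁻¹ := htnear
      _ ≤ _ := by
        apply inv_anti₀ hxinvpos hxinv
  have : IsUnit (algebraMap ℂ (Matrix (Fin n) (Fin n) ℂ) z₀ - B) :=
    (Units.ofNearby x _ hnear).isUnit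
  exact (spectrum.mem_iff.mp hz₀mem) this
/-- The key consequence of Metzler + Hurwitz: a positive vector `v` with `M v = -1`. -/
lemma exists_pos_mulVec {n : ℕ} (M : Matrix (Fin n) (Fin n) ℝ) (hM : Metzler M)
    (hMdiag : ∀ i, M i i = -1) (hMH : Hurwitz M) :
    ∃ v : Fin n → ℝ, (∀ i, 0 < v i) ∧ ∀ i, (M *ᵥ v) i = -1 := by
  cases isEmpty_or_nonempty (Fin n) with
  | inl h => exact ⟨fun _ => 1, fun i => isEmptyElim i, fun i => isEmptyElim i⟩
  | inr h =>
    set A := M + 1 with hA_def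
    have hA : ∀ i j, 0 ≤ A i j := by
      intro i j
      by_cases hij : i = j
      · subst hij
        simp [hA_def, Matrix.add_apply, Matrix.one_apply_eq, hMdiag i]
      · have h2 := hM i j hij
        simp only [hA_def, Matrix.add_apply, Matrix.one_apply_ne hij, add_zero]
        linarith
    set B := A.map Complex.ofReal with hB_def
    have hBM : B = M.map Complex.ofReal + 1 := by
      ext i j
      by_cases hij : i = j <;>
        simp [hB_def, hA_def, Matrix.map_apply, Matrix.add_apply, Matrix.one_apply, hij]
    have hmem := GainAux.spectralRadius_mem_spectrum A hA
    set ρ := spectralRadius ℂ B with hρ_def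
    have hρ_ne_top : ρ ≠ ⊤ :=
      ne_top_of_le_ne_top ENNReal.coe_ne_top (spectrum.spectralRadius_le_nnnorm B)
    have hrlt : ρ.toReal < 1 := by
      have hsh : ((ρ.toReal : ℝ) : ℂ) - 1 ∈ spectrum ℂ (M.map Complex.ofReal) := by
        rw [spectrum.mem_iff]
        rw [spectrum.mem_iff] at hmem
        intro hcon
        apply hmem
        have he : algebraMap ℂ (Matrix (Fin n) (Fin n) ℂ) ((ρ.toReal : ℂ) - 1)
            - M.map Complex.ofReal = algebraMap ℂ (Matrix (Fin n) (Fin n) ℂ) (ρ.toReal : ℂ) - B := by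
          rw [hBM, map_sub, _root_.map_one, sub_sub, add_comm (1 : Matrix (Fin n) (Fin n) ℂ)]
        rw [he] at hcon
        exact hcon
      have h3 := hMH _ hsh
      simp only [Complex.sub_re, Complex.ofReal_re, Complex.one_re] at h3
      linarith
    have hρlt1 : ρ < 1 := by
      rw [← ENNReal.ofReal_toReal hρ_ne_top]
      exact ENNReal.ofReal_lt_one.mpr hrlt
    obtain ⟨c, hc1, hc2⟩ := ENNReal.lt_iff_exists_nnreal_btwn.mp hρlt1
    have hc2' : (c : ℝ) < 1 := by exact_mod_cast hc2
    have hsum : Summable (fun k : ℕ => A ^ k) := by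
      refine Summable.of_norm_bounded_eventually_nat (g := fun k => (c : ℝ) ^ k)
        (summable_geometric_of_lt_one c.coe_nonneg hc2') ?_
      filter_upwards [GainAux.eventually_nnnorm_pow_le B hc1] with k hk
      rw [hB_def, GainAux.map_ofReal_pow, GainAux.nnnorm_map_ofReal] at hk
      exact_mod_cast hk
    set S := ∑' k : ℕ, A ^ k with hS_def
    have hgeom : (1 - A) * S = 1 := by
      rw [hS_def, ← hsum.tsum_mul_left (1 - A)]
      refine GainAux.tsum_eq_one_of_telescope _ (fun k => A ^ k) (hsum.mul_left _) ?_
        (pow_zero A) hsum.tendsto_atTop_zero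
      intro k
      rw [sub_mul, one_mul, ← pow_succ']
    have hSent : ∀ i j, 0 ≤ S i j := by
      intro i j
      rw [hS_def, GainAux.entry_tsum hsum i j]
      exact tsum_nonneg fun k => GainAux.pow_entry_nonneg A hA k i j
    set v : Fin n → ℝ := S *ᵥ (fun _ => 1) with hv_def
    have hvnn : ∀ j, 0 ≤ v j := by
      intro j
      rw [hv_def]
      simp only [Matrix.mulVec, dotProduct, mul_one]
      exact Finset.sum_nonneg fun l _ => hSent j l
    have hvid : ∀ i, v i - (A *ᵥ v) i = 1 := by
      have h1 : (1 - A) *ᵥ v = fun _ => 1 := by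
        rw [hv_def, Matrix.mulVec_mulVec, hgeom, Matrix.one_mulVec]
      intro i
      have h2 := congrFun h1 i
      rw [Matrix.sub_mulVec, Pi.sub_apply, Matrix.one_mulVec] at h2
      exact h2
    have hAv : ∀ i, 0 ≤ (A *ᵥ v) i := by
      intro i
      simp only [Matrix.mulVec, dotProduct]
      exact Finset.sum_nonneg fun l _ => mul_nonneg (hA i l) (hvnn l)
    have hvpos : ∀ i, 0 < v i := by
      intro i
      have h5 := hvid i
      have h6 := hAv i
      nlinarith
    refine ⟨v, hvpos, fun i => ?_⟩
    have hMA : M = A - 1 := by rw [hA_def]; abel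
    rw [hMA, Matrix.sub_mulVec, Pi.sub_apply, Matrix.one_mulVec]
    have h7 := hvid i
    linarith

end GainAux

open scoped Classical in
theorem monotone_system_gain_construction {n : ℕ}
    (f : (Fin n → ℝ) → (Fin n → ℝ)) (hf : ContDiff ℝ 1 f) (hf0 : f 0 = 0)
    (J : (Fin n → ℝ) → Matrix (Fin n) (Fin n) ℝ)
    (hJ : ∀ x i j, J x i j = fderiv ℝ f x (Pi.single j 1) i)
    (hJMetzler : ∀ x : Fin n → ℝ, 0 ≤ x → Metzler (J x))
    (hJdiag : ∀ x : Fin n → ℝ, 0 ≤ x → ∀ i, J x i i < 0)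
    (M : Matrix (Fin n) (Fin n) ℝ) (hM : Metzler M) (hMdiag : ∀ i, M i i = -1)
    (hMH : Hurwitz M)
    (hbound : ∀ x : Fin n → ℝ, 0 ≤ x → ∀ i j, i ≠ j →
        J x i j / (-(J x i i)) ≤ M i j) :
    ∃ ψ : Fin n → Fin n → ℝ,
      (∀ i j, i ≠ j → 0 < M i j → 0 < ψ i j) ∧
      (∀ x : Fin n → ℝ, 0 ≤ x → ∀ i,
          ∑ j ∈ Finset.univ.filter (fun j => j ≠ i),
            J x i j / (-(J x i i)) * (ψ i j)⁻¹ ≤ 1) ∧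
      (∀ l : List (Fin n), IsCycle M l →
          ∏ t : Fin l.length, ψ (l.get (cyclicNext l t)) (l.get t) < 1) := by
  obtain ⟨v, hv, hMv⟩ := GainAux.exists_pos_mulVec M hM hMdiag hMH
  set s : Fin n → ℝ := fun i => ∑ j ∈ Finset.univ.filter (fun j => j ≠ i), M i j * v j
    with hs_def
  have hs_eq : ∀ i, s i = v i - 1 := by
    intro i
    have h1 := hMv i
    have h2 : (M *ᵥ v) i = ∑ j, M i j * v j := by
      simp [Matrix.mulVec, dotProduct]
    have h3 : ∑ j, M i j * v j = M i i * v i + s i := by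
      rw [hs_def]
      simp only []
      rw [Finset.filter_ne' Finset.univ i, ← Finset.add_sum_erase Finset.univ _ (Finset.mem_univ i)]
    rw [h2, h3, hMdiag i] at h1
    linarith
  have hs_nonneg : ∀ i, 0 ≤ s i := by
    intro i
    rw [hs_def]
    exact Finset.sum_nonneg fun j hj =>
      mul_nonneg (hM i j (Ne.symm (Finset.mem_filter.mp hj).2)) (hv j).le
  have hs_lt : ∀ i, s i < v i := by
    intro i; rw [hs_eq i]; linarith [hv i]
  refine ⟨fun i j => s i / v j, ?_, ?_, ?_⟩
  · intro i j hij hMij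
    have hterm : 0 < M i j * v j := mul_pos hMij (hv j)
    have hle : M i j * v j ≤ s i := by
      rw [hs_def]
      exact Finset.single_le_sum
        (fun k hk => mul_nonneg (hM i k (Ne.symm (Finset.mem_filter.mp hk).2)) (hv k).le)
        (Finset.mem_filter.mpr ⟨Finset.mem_univ j, Ne.symm hij⟩)
    exact div_pos (lt_of_lt_of_le hterm hle) (hv j)
  · intro x hx i
    have hJd : 0 < -(J x i i) := by linarith [hJdiag x hx i]
    by_cases hsi : s i = 0
    · have hzero : ∀ j ∈ Finset.univ.filter (fun j => j ≠ i),
          J x i j / (-(J x i i)) * (s i / v j)⁻¹ = 0 := by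
        intro j hj
        have hji : j ≠ i := (Finset.mem_filter.mp hj).2
        have hMij0 : M i j * v j = 0 := by
          have h6 : s i = ∑ k ∈ Finset.univ.filter (fun k => k ≠ i), M i k * v k := by
            rw [hs_def]
          rw [h6] at hsi
          exact (Finset.sum_eq_zero_iff_of_nonneg (fun k hk =>
            mul_nonneg (hM i k (Ne.symm (Finset.mem_filter.mp hk).2)) (hv k).le)).mp hsi j hj
        have hMij : M i j = 0 := by
          rcases mul_eq_zero.mp hMij0 with h | h
          · exact h
          · exact absurd h (hv j).ne'
        have hle := hbound x hx i j (Ne.symm hji)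
        have hge : 0 ≤ J x i j / (-(J x i i)) :=
          div_nonneg (hJMetzler x hx i j (Ne.symm hji)) hJd.le
        have : J x i j / (-(J x i i)) = 0 := le_antisymm (hMij ▸ hle) hge
        rw [this, zero_mul]
      rw [Finset.sum_eq_zero hzero]
      norm_num
    · have hsi' : 0 < s i := lt_of_le_of_ne (hs_nonneg i) (Ne.symm hsi)
      have hstep : ∑ j ∈ Finset.univ.filter (fun j => j ≠ i),
          J x i j / (-(J x i i)) * (s i / v j)⁻¹
          ≤ ∑ j ∈ Finset.univ.filter (fun j => j ≠ i), M i j * v j / s i := by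
        refine Finset.sum_le_sum fun j hj => ?_
        have hji : j ≠ i := (Finset.mem_filter.mp hj).2
        rw [inv_div]
        have h4 : 0 ≤ v j / s i := div_nonneg (hv j).le hsi'.le
        calc J x i j / (-(J x i i)) * (v j / s i) ≤ M i j * (v j / s i) :=
              mul_le_mul_of_nonneg_right (hbound x hx i j (Ne.symm hji)) h4
          _ = M i j * v j / s i := by rw [mul_div_assoc]
      refine le_trans hstep ?_
      rw [← Finset.sum_div]
      have hs2 : ∑ j ∈ Finset.univ.filter (fun j => j ≠ i), M i j * v j = s i := by
        rw [hs_def]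
      rw [hs2, div_self hsi'.ne']
  · intro l hl
    obtain ⟨hlen, hnodup, hedge⟩ := hl
    have hlpos : 0 < l.length := by omega
    have hinj : Function.Injective (cyclicNext l) := by
      intro a b hab
      have hval : (a.1 + 1) % l.length = (b.1 + 1) % l.length := congrArg Fin.val hab
      have key : ∀ m : ℕ, m < l.length → (m + 1) % l.length
          = if m + 1 = l.length then 0 else m + 1 := by
        intro m hm
        by_cases h : m + 1 = l.length
        · simp [h, Nat.mod_self]
        · rw [Nat.mod_eq_of_lt (by omega), if_neg h]
      rw [key a.1 a.isLt, key b.1 b.isLt] at hval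
      apply Fin.ext
      have ha := a.isLt
      have hb := b.isLt
      split_ifs at hval <;> omega
    have hbij : Function.Bijective (cyclicNext l) :=
      Finite.injective_iff_bijective.mp hinj
    have hre : ∏ t : Fin l.length, s (l.get (cyclicNext l t))
        = ∏ t : Fin l.length, s (l.get t) :=
      Function.Bijective.prod_comp hbij (fun t => s (l.get t))
    have hprod : ∏ t : Fin l.length, s (l.get (cyclicNext l t)) / v (l.get t)
        = ∏ t : Fin l.length, s (l.get t) / v (l.get t) := by
      rw [Finset.prod_div_distrib, Finset.prod_div_distrib, hre]
    show ∏ t : Fin l.length, s (l.get (cyclicNext l t)) / v (l.get t) < 1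
    rw [hprod]
    set F : Fin l.length → ℝ := fun t => s (l.get t) / v (l.get t) with hF_def
    have hFnn : ∀ t, 0 ≤ F t := fun t => div_nonneg (hs_nonneg _) (hv _).le
    have hFlt : ∀ t, F t < 1 := fun t => (div_lt_one (hv _)).mpr (hs_lt _)
    set t₀ : Fin l.length := ⟨0, hlpos⟩
    calc ∏ t : Fin l.length, F t
        = F t₀ * ∏ t ∈ Finset.univ.erase t₀, F t :=
          (Finset.mul_prod_erase Finset.univ F (Finset.mem_univ t₀)).symm
      _ ≤ F t₀ * 1 := by
          refine mul_le_mul_of_nonneg_left ?_ (hFnn t₀)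
          exact Finset.prod_le_one (fun t _ => hFnn t) (fun t _ => (hFlt t).le)
      _ = F t₀ := mul_one _
      _ < 1 := hFlt t₀
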